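/- Let M be a finite ultrametric space with n+1 points. Then the Banach–Mazur distance between the Lipschitz free space F(M) and ℓ₁^n is at most 8. -/

import Mathlib

open Finset

/-- The Lipschitz-free (Kantorovich–Rubinstein) norm of a molecule on a finite
metric space, expressed via duality with `1`-Lipschitz functions. -/
noncomputable def freeNorm (M : Type*) [MetricSpace M] [Fintype M] (m : M → ℝ) : ℝ :=
  sSup {r : ℝ | ∃ f : M → ℝ, LipschitzWith 1 f ∧ r = ∑ p, m p * f p}

/-- Molecules: the underlying vector space of the Lipschitz free space on a finite space;
equipped with `freeNorm` it is the Lipschitz free space `F(M)`. -/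
def molecules (M : Type*) [Fintype M] : Submodule ℝ (M → ℝ) where
  carrier := {m | ∑ p, m p = 0}
  add_mem' := by
    intro a b ha hb
    simp only [Set.mem_setOf_eq, Pi.add_apply, Finset.sum_add_distrib] at *
    rw [ha, hb]; ring
  zero_mem' := by simp
  smul_mem' := by
    intro c a ha
    simp only [Set.mem_setOf_eq, Pi.smul_apply, smul_eq_mul, ← Finset.mul_sum] at *
    rw [ha]; ring

/-- The norm of `ℓ₁^k`. -/
def l1norm {k : ℕ} (x : Fin k → ℝ) : ℝ := ∑ i, |x i|

/-!
Round every distance up to a power of two. This costs a factor `< 2`, keeps the metric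
ultrametric, and makes distinct distances differ by a factor `≥ 2`. Enumerate the points and join
each point `i ≠ 0` to its parent: the first point of the smallest ball around `i` containing an
earlier point. Along any path towards the root `0` the edge lengths at least double, and the path
from a point of a ball leaves the ball only through the first point of that ball; so the tree
metric is at most `4` times the rounded metric, hence at most `8` times the original one. The
normalised edge molecules `(δ x - δ p) / d(x, p)` then behave like the unit vector basis of `ℓ₁^n`
up to the factor `8`: the upper bound is the triangle inequality, and the lower bound comes from
pairing with `1/8` of the tree potential whose slope on every edge is the sign of the coefficient.
-/

noncomputable section

def dyadicCeil (r : ℝ) : ℝ := 2 ^ Int.clog 2 r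

lemma le_dyadicCeil (r : ℝ) : r ≤ dyadicCeil r := by
  exact_mod_cast Int.self_le_zpow_clog one_lt_two r

lemma dyadicCeil_lt_two_mul {r : ℝ} (hr : 0 < r) : dyadicCeil r < 2 * r := by
  have h : (2 : ℝ) ^ (Int.clog 2 r - 1) < r := by
    exact_mod_cast Int.zpow_pred_clog_lt_self one_lt_two hr
  rw [zpow_sub_one₀ two_ne_zero] at h
  unfold dyadicCeil
  linarith

lemma dyadicCeil_mono {r s : ℝ} (hr : 0 < r) (h : r ≤ s) : dyadicCeil r ≤ dyadicCeil s :=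
  zpow_le_zpow_right₀ one_le_two (Int.clog_mono_right hr h)

lemma two_mul_dyadicCeil_le {r s : ℝ} (h : dyadicCeil r < dyadicCeil s) :
    2 * dyadicCeil r ≤ dyadicCeil s := by
  have hlt : Int.clog 2 r < Int.clog 2 s := (zpow_lt_zpow_iff_right₀ one_lt_two).1 h
  calc 2 * dyadicCeil r = 2 ^ (Int.clog 2 r + 1) := by
        rw [dyadicCeil, zpow_add_one₀ two_ne_zero, mul_comm]
    _ ≤ dyadicCeil s := zpow_le_zpow_right₀ one_le_two hlt

structure IsDyadicUltrametric {ι : Type*} (ρ : ι → ι → ℝ) : Prop where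
  self_eq_zero : ∀ i, ρ i i = 0
  symm : ∀ i j, ρ i j = ρ j i
  le_max : ∀ i j k, ρ i k ≤ max (ρ i j) (ρ j k)
  two_mul_le_of_lt : ∀ {i j k l}, ρ i j < ρ k l → 2 * ρ i j ≤ ρ k l

namespace IsDyadicUltrametric

variable {ι : Type*} {ρ : ι → ι → ℝ}

lemma nonneg (hρ : IsDyadicUltrametric ρ) (i j : ι) : 0 ≤ ρ i j := by
  simpa [hρ.self_eq_zero, hρ.symm j i] using hρ.le_max i j i

lemma comp (hρ : IsDyadicUltrametric ρ) {κ : Type*} (g : κ → ι) :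
    IsDyadicUltrametric fun a b => ρ (g a) (g b) where
  self_eq_zero a := hρ.self_eq_zero (g a)
  symm a b := hρ.symm (g a) (g b)
  le_max a b c := hρ.le_max (g a) (g b) (g c)
  two_mul_le_of_lt h := hρ.two_mul_le_of_lt h

end IsDyadicUltrametric

section DyadicDist

variable {M : Type*} [MetricSpace M]

open Classical in
def dyadicDist (x y : M) : ℝ := if x = y then 0 else dyadicCeil (dist x y)

lemma dist_le_dyadicDist (x y : M) : dist x y ≤ dyadicDist x y := by
  unfold dyadicDist
  split_ifs with h
  · simp [h]
  · exact le_dyadicCeil _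

lemma dyadicDist_le_two_mul_dist (x y : M) : dyadicDist x y ≤ 2 * dist x y := by
  unfold dyadicDist
  split_ifs with h
  · simp [h]
  · exact (dyadicCeil_lt_two_mul (dist_pos.2 h)).le

lemma isDyadicUltrametric_dyadicDist [IsUltrametricDist M] :
    IsDyadicUltrametric (dyadicDist (M := M)) where
  self_eq_zero x := by simp [dyadicDist]
  symm x y := by
    by_cases h : x = y
    · simp [h]
    · simp [dyadicDist, h, Ne.symm h, dist_comm]
  le_max x y z := by
    by_cases hxz : x = z
    · subst hxz
      calc dyadicDist x x = 0 := if_pos rfl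
        _ ≤ _ := le_max_of_le_left (dist_nonneg.trans (dist_le_dyadicDist x y))
    by_cases hxy : x = y
    · simp [hxy]
    by_cases hyz : y = z
    · simp [hyz]
    simp only [dyadicDist, if_neg hxz, if_neg hxy, if_neg hyz]
    rcases le_max_iff.1 (IsUltrametricDist.dist_triangle_max x y z) with h | h
    · exact le_max_of_le_left (dyadicCeil_mono (dist_pos.2 hxz) h)
    · exact le_max_of_le_right (dyadicCeil_mono (dist_pos.2 hxz) h)
  two_mul_le_of_lt {x y z w} h := by
    by_cases hxy : x = y
    · simpa [hxy, dyadicDist] using h.le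
    by_cases hzw : z = w
    · subst hzw
      have hzero : dyadicDist z z = 0 := if_pos rfl
      linarith [dist_nonneg.trans (dist_le_dyadicDist x y)]
    simp only [dyadicDist, if_neg hxy, if_neg hzw] at h ⊢
    exact two_mul_dyadicCeil_le h

end DyadicDist

section ParentTree

variable {ι : Type*} [LinearOrder ι] [OrderBot ι] [Fintype ι] (ρ : ι → ι → ℝ)

lemma nonempty_filter_lt_of_ne_bot {i : ι} (hi : i ≠ ⊥) : (univ.filter (· < i)).Nonempty :=
  ⟨⊥, by simpa using bot_lt_iff_ne_bot.2 hi⟩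

def predDist (i : ι) : ℝ :=
  if hi : i = ⊥ then 0 else (univ.filter (· < i)).inf' (nonempty_filter_lt_of_ne_bot hi) (ρ i)

variable {ρ}

lemma predDist_le {i j : ι} (hj : j < i) : predDist ρ i ≤ ρ i j := by
  rw [predDist, dif_neg (ne_bot_of_gt hj)]
  exact inf'_le _ (by simpa using hj)

lemma exists_lt_predDist_eq {i : ι} (hi : i ≠ ⊥) : ∃ j < i, ρ i j = predDist ρ i := by
  obtain ⟨j, hj, hje⟩ := exists_mem_eq_inf' (nonempty_filter_lt_of_ne_bot hi) (ρ i)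
  exact ⟨j, by simpa using hj, by rw [predDist, dif_neg hi, hje]⟩

lemma IsDyadicUltrametric.predDist_nonneg (hρ : IsDyadicUltrametric ρ) (i : ι) :
    0 ≤ predDist ρ i := by
  by_cases hi : i = ⊥
  · simp [predDist, hi]
  · obtain ⟨j, -, hj⟩ := exists_lt_predDist_eq (ρ := ρ) hi
    exact hj ▸ hρ.nonneg i j

lemma nonempty_filter_dist_le_predDist {i : ι} (hi : i ≠ ⊥) :
    (univ.filter fun j => ρ i j ≤ predDist ρ i).Nonempty := by
  obtain ⟨j, -, hj⟩ := exists_lt_predDist_eq (ρ := ρ) hi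
  exact ⟨j, by simp [hj]⟩

variable (ρ) in
/-- The tie-break matters: taking the *first* point at distance `predDist ρ i` is what makes
`predDist` at least double along each edge. -/
def parent (i : ι) : ι :=
  if hi : i = ⊥ then ⊥
  else (univ.filter fun j => ρ i j ≤ predDist ρ i).min' (nonempty_filter_dist_le_predDist hi)

lemma dist_parent_le {i : ι} (hi : i ≠ ⊥) : ρ i (parent ρ i) ≤ predDist ρ i := by
  rw [parent, dif_neg hi]
  simpa using min'_mem _ (nonempty_filter_dist_le_predDist hi)

lemma parent_le {i j : ι} (hi : i ≠ ⊥) (hj : ρ i j ≤ predDist ρ i) : parent ρ i ≤ j := by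
  rw [parent, dif_neg hi]
  exact min'_le _ _ (by simpa using hj)

lemma parent_lt {i : ι} (hi : i ≠ ⊥) : parent ρ i < i := by
  obtain ⟨j, hj, hje⟩ := exists_lt_predDist_eq (ρ := ρ) hi
  exact (parent_le hi hje.le).trans_lt hj

lemma IsDyadicUltrametric.two_mul_predDist_le (hρ : IsDyadicUltrametric ρ) {i : ι} (hi : i ≠ ⊥)
    (hp : parent ρ i ≠ ⊥) : 2 * predDist ρ i ≤ predDist ρ (parent ρ i) := by
  obtain ⟨j, hj, hje⟩ := exists_lt_predDist_eq (ρ := ρ) hp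
  have hlt : predDist ρ i < predDist ρ (parent ρ i) := by
    by_contra! hle
    have : ρ i j ≤ predDist ρ i :=
      (hρ.le_max i (parent ρ i) j).trans (max_le (dist_parent_le hi) (hje ▸ hle))
    exact (parent_le hi this).not_gt hj
  have hdist : ρ i (parent ρ i) = predDist ρ i :=
    (dist_parent_le hi).antisymm (predDist_le (parent_lt hi))
  rw [← hdist, ← hje] at hlt ⊢
  exact hρ.two_mul_le_of_lt hlt

variable (ρ) in
def treePotential (t : ι → ℝ) : ι → ℝ :=
  wellFounded_lt.fix fun i φ => if hi : i = ⊥ then 0 else φ (parent ρ i) (parent_lt hi) + t i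

lemma treePotential_of_ne_bot (t : ι → ℝ) {i : ι} (hi : i ≠ ⊥) :
    treePotential ρ t i = treePotential ρ t (parent ρ i) + t i := by
  rw [treePotential, WellFounded.fix_eq, dif_neg hi]

end ParentTree

namespace IsDyadicUltrametric

variable {ι : Type*} [LinearOrder ι] [OrderBot ι] [Fintype ι] {ρ : ι → ι → ℝ} {t : ι → ℝ}

/-- Inside a ball with first point `r`, the path from `i` to the root passes through `r`, and the
edge lengths along it at least double, so they sum to at most `2 s - predDist ρ i`. -/
lemma abs_treePotential_sub_add_predDist_le (hρ : IsDyadicUltrametric ρ)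
    (ht : ∀ i ≠ ⊥, |t i| ≤ predDist ρ i) {c r : ι} {s : ℝ} (hr : ρ c r ≤ s)
    (hmin : ∀ j, ρ c j ≤ s → r ≤ j) (i : ι) (hi : ρ c i ≤ s) (hir : i ≠ r) :
    |treePotential ρ t i - treePotential ρ t r| + predDist ρ i ≤ 2 * s := by
  induction i using WellFoundedLT.induction with
  | _ i ih =>
  have hri : r < i := (hmin i hi).lt_of_ne hir.symm
  have hi0 : i ≠ ⊥ := ne_bot_of_gt hri
  have hpred : predDist ρ i ≤ s :=
    (predDist_le hri).trans ((hρ.le_max i c r).trans (max_le (hρ.symm i c ▸ hi) hr))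
  have hp : ρ c (parent ρ i) ≤ s :=
    (hρ.le_max c i _).trans (max_le hi ((dist_parent_le hi0).trans hpred))
  rw [treePotential_of_ne_bot t hi0]
  by_cases hpr : parent ρ i = r
  · rw [hpr, add_sub_cancel_left]
    linarith [ht i hi0]
  · have hp0 : parent ρ i ≠ ⊥ := ne_bot_of_gt ((hmin _ hp).lt_of_ne (Ne.symm hpr))
    have hind := ih _ (parent_lt hi0) hp hpr
    have hdouble := hρ.two_mul_predDist_le hi0 hp0
    calc |treePotential ρ t (parent ρ i) + t i - treePotential ρ t r| + predDist ρ i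
        ≤ |treePotential ρ t (parent ρ i) - treePotential ρ t r| + |t i| + predDist ρ i := by
          gcongr
          rw [add_sub_right_comm]
          exact abs_add_le _ _
      _ ≤ 2 * s := by linarith [ht i hi0]

lemma abs_treePotential_sub_le (hρ : IsDyadicUltrametric ρ)
    (ht : ∀ i ≠ ⊥, |t i| ≤ predDist ρ i) (u v : ι) :
    |treePotential ρ t u - treePotential ρ t v| ≤ 4 * ρ u v := by
  set s := ρ u v
  have hball : (univ.filter fun j => ρ u j ≤ s).Nonempty := ⟨v, by simp [s]⟩
  set r := (univ.filter fun j => ρ u j ≤ s).min' hball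
  have hr : ρ u r ≤ s := by simpa using min'_mem _ hball
  have hmin : ∀ j, ρ u j ≤ s → r ≤ j := fun j hj => min'_le _ _ (by simpa using hj)
  have hbound : ∀ i, ρ u i ≤ s → |treePotential ρ t i - treePotential ρ t r| ≤ 2 * s := by
    intro i hi
    by_cases hir : i = r
    · simp [hir, hρ.nonneg u v, s]
    · linarith [hρ.abs_treePotential_sub_add_predDist_le ht hr hmin i hi hir,
        hρ.predDist_nonneg i]
  calc |treePotential ρ t u - treePotential ρ t v|
      ≤ |treePotential ρ t u - treePotential ρ t r| + |treePotential ρ t v - treePotential ρ t r| :=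
        (abs_sub_le _ _ _).trans_eq (by rw [abs_sub_comm (treePotential ρ t r)])
    _ ≤ 4 * s := by
      linarith [hbound u (by simp [hρ.self_eq_zero, hρ.nonneg u v, s]), hbound v le_rfl]

end IsDyadicUltrametric

section FreeNorm

variable {M : Type*} [MetricSpace M] [Fintype M]

lemma freeNorm_le {m : M → ℝ} {B : ℝ} (h : ∀ f : M → ℝ, LipschitzWith 1 f → ∑ p, m p * f p ≤ B) :
    freeNorm M m ≤ B :=
  csSup_le ⟨0, fun _ => 0, (LipschitzWith.const 0).weaken zero_le_one, by simp⟩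
    fun _ ⟨f, hf, hr⟩ => hr ▸ h f hf

/-- Molecules have total mass zero, so pairing with `f` only sees `f - f x₀`, which is bounded. -/
lemma le_freeNorm [Nonempty M] {m : M → ℝ} (hm : m ∈ molecules M) {f : M → ℝ}
    (hf : LipschitzWith 1 f) : ∑ p, m p * f p ≤ freeNorm M m := by
  obtain ⟨x₀⟩ := ‹Nonempty M›
  have hmass : ∑ p, m p = 0 := hm
  refine le_csSup ⟨∑ p, |m p| * dist p x₀, ?_⟩ ⟨f, hf, rfl⟩
  rintro _ ⟨g, hg, rfl⟩
  have hshift : ∑ p, m p * g p = ∑ p, m p * (g p - g x₀) := by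
    simp only [mul_sub, sum_sub_distrib, ← sum_mul, hmass, zero_mul, sub_zero]
  rw [hshift]
  refine sum_le_sum fun p _ => ?_
  calc m p * (g p - g x₀) ≤ |m p| * |g p - g x₀| := (le_abs_self _).trans (abs_mul _ _).le
    _ ≤ |m p| * dist p x₀ := by
        gcongr
        simpa [Real.dist_eq] using hg.dist_le_mul p x₀

open Classical in
def edgeMolecule (x y : M) : M → ℝ := (dist x y)⁻¹ • (Pi.single x 1 - Pi.single y 1)

lemma edgeMolecule_mem (x y : M) : edgeMolecule x y ∈ molecules M := by
  show ∑ p, edgeMolecule x y p = 0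
  simp [edgeMolecule, ← mul_sum, sum_sub_distrib]

lemma sum_edgeMolecule_mul (x y : M) (f : M → ℝ) :
    ∑ p, edgeMolecule x y p * f p = (f x - f y) / dist x y := by
  classical
  simp only [edgeMolecule, Pi.smul_apply, Pi.sub_apply, smul_eq_mul, mul_assoc, ← mul_sum, sub_mul,
    sum_sub_distrib, Pi.single_apply, ite_mul, one_mul, zero_mul, sum_ite_eq', mem_univ, if_true,
    div_eq_inv_mul]

variable {k : ℕ}

def edgeMap (x y : Fin k → M) : (Fin k → ℝ) →ₗ[ℝ] molecules M :=
  LinearMap.codRestrict _ (Fintype.linearCombination ℝ fun j => edgeMolecule (x j) (y j))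
    fun c => by
      rw [Fintype.linearCombination_apply]
      exact Submodule.sum_mem _ fun j _ => Submodule.smul_mem _ _ (edgeMolecule_mem _ _)

lemma sum_edgeMap_mul (x y : Fin k → M) (c : Fin k → ℝ) (f : M → ℝ) :
    ∑ p, (edgeMap x y c : M → ℝ) p * f p = ∑ j, c j * (f (x j) - f (y j)) / dist (x j) (y j) := by
  simp only [edgeMap, LinearMap.codRestrict_apply, Fintype.linearCombination_apply,
    Finset.sum_apply, Pi.smul_apply, smul_eq_mul, sum_mul]
  rw [sum_comm]
  simp only [mul_assoc, ← mul_sum, sum_edgeMolecule_mul, mul_div_assoc]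

lemma freeNorm_edgeMap_le (x y : Fin k → M) (c : Fin k → ℝ) :
    freeNorm M (edgeMap x y c) ≤ l1norm c := by
  refine freeNorm_le fun f hf => ?_
  rw [sum_edgeMap_mul, l1norm]
  gcongr with j
  have hlip : |f (x j) - f (y j)| ≤ dist (x j) (y j) := by
    simpa [Real.dist_eq] using hf.dist_le_mul (x j) (y j)
  calc c j * (f (x j) - f (y j)) / dist (x j) (y j)
      ≤ |c j| * |f (x j) - f (y j)| / dist (x j) (y j) := by
        rw [← abs_mul]; gcongr; exact le_abs_self _
    _ ≤ |c j| := div_le_of_le_mul₀ dist_nonneg (abs_nonneg _) (by gcongr)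

end FreeNorm

lemma finrank_molecules_add_one {M : Type*} [Fintype M] [Nonempty M] :
    Module.finrank ℝ (molecules M) + 1 = Fintype.card M := by
  classical
  have hker : molecules M = LinearMap.ker (Fintype.linearCombination ℝ fun _ : M => (1 : ℝ)) := by
    ext m
    simp [molecules, Fintype.linearCombination_apply]
  have hsurj : Function.Surjective (Fintype.linearCombination ℝ fun _ : M => (1 : ℝ)) := by
    obtain ⟨x⟩ := ‹Nonempty M›
    intro r
    exact ⟨Pi.single x r, by simp [Fintype.linearCombination_apply]⟩
  have := LinearMap.finrank_range_add_finrank_ker (Fintype.linearCombination ℝ fun _ : M => (1 : ℝ))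
  rw [LinearMap.range_eq_top.2 hsurj, finrank_top, Module.finrank_self,
    Module.finrank_fintype_fun_eq_card, ← hker] at this
  omega

section Ultrametric

variable {M : Type*} [MetricSpace M] {n : ℕ} (e : M ≃ Fin (n + 1))

def enumDyadicDist (i j : Fin (n + 1)) : ℝ := dyadicDist (e.symm i) (e.symm j)

def treeChild (j : Fin n) : M := e.symm j.succ

def treeParent (j : Fin n) : M := e.symm (parent (enumDyadicDist e) j.succ)

lemma treeChild_ne_treeParent (j : Fin n) : treeChild e j ≠ treeParent e j :=
  e.symm.injective.ne (parent_lt (Fin.succ_ne_zero j)).ne'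

lemma lipschitzWith_treePotential_div_eight [IsUltrametricDist M] {t : Fin (n + 1) → ℝ}
    (ht : ∀ i ≠ ⊥, |t i| ≤ predDist (enumDyadicDist e) i) :
    LipschitzWith 1 fun p => treePotential (enumDyadicDist e) t (e p) / 8 := by
  have hρ : IsDyadicUltrametric (enumDyadicDist e) := isDyadicUltrametric_dyadicDist.comp e.symm
  refine LipschitzWith.of_dist_le_mul fun x y => ?_
  have h := hρ.abs_treePotential_sub_le ht (e x) (e y)
  simp only [enumDyadicDist, Equiv.symm_apply_apply] at h
  rw [Real.dist_eq, ← sub_div, abs_div, abs_of_pos (by norm_num : (0 : ℝ) < 8), NNReal.coe_one,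
    one_mul]
  linarith [dyadicDist_le_two_mul_dist x y]

def signedParentDist (c : Fin n → ℝ) (i : Fin (n + 1)) : ℝ :=
  if hi : i = ⊥ then 0
  else SignType.sign (c (i.pred hi)) * dist (e.symm i) (e.symm (parent (enumDyadicDist e) i))

lemma abs_signedParentDist_le (c : Fin n → ℝ) (i : Fin (n + 1)) (hi : i ≠ ⊥) :
    |signedParentDist e c i| ≤ predDist (enumDyadicDist e) i := by
  have hsign : ∀ σ : SignType, |(σ : ℝ)| ≤ 1 := fun σ => by cases σ <;> simp
  calc |signedParentDist e c i| ≤ dist (e.symm i) (e.symm (parent (enumDyadicDist e) i)) := by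
        rw [signedParentDist, dif_neg hi, abs_mul, abs_dist]
        exact mul_le_of_le_one_left dist_nonneg (hsign _)
    _ ≤ enumDyadicDist e i (parent (enumDyadicDist e) i) := dist_le_dyadicDist _ _
    _ ≤ predDist (enumDyadicDist e) i := dist_parent_le hi

lemma treePotential_signedParentDist_sub (c : Fin n → ℝ) (j : Fin n) :
    treePotential (enumDyadicDist e) (signedParentDist e c) (e (treeChild e j))
      - treePotential (enumDyadicDist e) (signedParentDist e c) (e (treeParent e j))
      = SignType.sign (c j) * dist (treeChild e j) (treeParent e j) := by
  have hj : j.succ ≠ ⊥ := Fin.succ_ne_zero j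
  rw [treeChild, treeParent, Equiv.apply_symm_apply, Equiv.apply_symm_apply,
    treePotential_of_ne_bot _ hj, add_sub_cancel_left, signedParentDist, dif_neg hj, Fin.pred_succ]

variable [Fintype M]

def ultrametricEdgeMap : (Fin n → ℝ) →ₗ[ℝ] molecules M :=
  edgeMap (treeChild e) (treeParent e) ∘ₗ ((8 : ℝ) • LinearMap.id)

lemma freeNorm_ultrametricEdgeMap_le (c : Fin n → ℝ) :
    freeNorm M (ultrametricEdgeMap e c) ≤ 8 * l1norm c := by
  have h := freeNorm_edgeMap_le (treeChild e) (treeParent e) ((8 : ℝ) • c)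
  simp only [ultrametricEdgeMap, LinearMap.comp_apply, LinearMap.smul_apply, LinearMap.id_apply]
  simpa [l1norm, abs_mul, ← mul_sum] using h

lemma l1norm_le_freeNorm_ultrametricEdgeMap [IsUltrametricDist M] (c : Fin n → ℝ) :
    l1norm c ≤ freeNorm M (ultrametricEdgeMap e c) := by
  have : Nonempty M := ⟨e.symm 0⟩
  have h := le_freeNorm (ultrametricEdgeMap e c).2
    (lipschitzWith_treePotential_div_eight e (abs_signedParentDist_le e c))
  rw [ultrametricEdgeMap, LinearMap.comp_apply, sum_edgeMap_mul] at h
  refine le_of_eq_of_le (sum_congr rfl fun j _ => ?_) h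
  rw [← sub_div, treePotential_signedParentDist_sub]
  simp only [LinearMap.smul_apply, LinearMap.id_apply, Pi.smul_apply, smul_eq_mul]
  have hw := dist_pos.2 (treeChild_ne_treeParent e j)
  field_simp
  rw [← self_mul_sign]

lemma ultrametricEdgeMap_injective [IsUltrametricDist M] :
    Function.Injective (ultrametricEdgeMap e) := by
  refine (injective_iff_map_eq_zero _).2 fun c hc => ?_
  have hle : l1norm c ≤ 0 := calc
    l1norm c ≤ freeNorm M (ultrametricEdgeMap e c) := l1norm_le_freeNorm_ultrametricEdgeMap e c
    _ = freeNorm M (ultrametricEdgeMap e 0) := by rw [hc, map_zero]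
    _ ≤ 8 * l1norm (0 : Fin n → ℝ) := freeNorm_ultrametricEdgeMap_le e 0
    _ = 0 := by simp [l1norm]
  have habs := (sum_eq_zero_iff_of_nonneg fun j _ => abs_nonneg (c j)).1
    (hle.antisymm (sum_nonneg fun j _ => abs_nonneg (c j)))
  funext j
  simpa using habs j (mem_univ j)

end Ultrametric

end

/-- the Lipschitz free space over a finite ultrametric space with `n+1`
points is at Banach–Mazur distance at most `8` from `ℓ₁^n`. -/
theorem stmt2 {M : Type*} [Fintype M] [MetricSpace M] (n : ℕ)
    (hcard : Fintype.card M = n + 1)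
    (hultra : ∀ x y z : M, dist x z ≤ max (dist x y) (dist y z)) :
    ∃ T : molecules M ≃ₗ[ℝ] (Fin n → ℝ),
      ∀ m : molecules M, l1norm (T m) ≤ freeNorm M m ∧ freeNorm M m ≤ 8 * l1norm (T m) := by
  have : IsUltrametricDist M := ⟨hultra⟩
  have : Nonempty M := Fintype.card_pos_iff.1 (by omega)
  let e : M ≃ Fin (n + 1) := Fintype.equivFinOfCardEq hcard
  have hdim : Module.finrank ℝ (Fin n → ℝ) = Module.finrank ℝ (molecules M) := by
    have := finrank_molecules_add_one (M := M)
    rw [Module.finrank_fin_fun]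
    omega
  let S := LinearMap.linearEquivOfInjective _ (ultrametricEdgeMap_injective e) hdim
  refine ⟨S.symm, fun m => ?_⟩
  obtain ⟨c, rfl⟩ := S.surjective m
  rw [S.symm_apply_apply, LinearMap.linearEquivOfInjective_apply]
  exact ⟨l1norm_le_freeNorm_ultrametricEdgeMap e c, freeNorm_ultrametricEdgeMap_le e c⟩
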